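/- Let n ≥ 4, let B be the (n−1)×(n−1) circulant matrix circ(3,1,0,…,0,1), and let Q be the n×n block matrix Q = [[n−1, 𝟏ᵀ],[𝟏, B]] (the signless Laplacian matrix of the wheel graph W_n). Let C = circ(1,0,…,0,1) of order n−1, X = 2(CCᵀ + I_{n−1})⁻¹((n−1)I_{n−1} − J_{n−1}), and H = (1/(4(n−1))) · [[5, −𝟏ᵀ],[−𝟏, J_{n−1} + 2X]]. Then H is the Moore–Penrose inverse of Q, i.e. Q H Q = Q, H Q H = H, (Q H)ᵀ = Q H, and (H Q)ᵀ = H Q. -/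

import Mathlib

open Matrix

noncomputable section

/-- The circulant matrix of order `m` with defining vector `v`:
its `(i,j)` entry is `v ((j - i) mod m)`. -/
def circ {m : ℕ} (v : Fin m → ℝ) : Matrix (Fin m) (Fin m) ℝ :=
  Matrix.of fun i j => v (j - i)

/-- The `m × m` all-ones matrix. -/
def Jmat (m : ℕ) : Matrix (Fin m) (Fin m) ℝ := Matrix.of fun _ _ => 1

/-!
`Q` is invertible with inverse `H`, so the Penrose equations are immediate from `Q H = 1`.
With `S` the cyclic shift, `C = 1 + S` and `B = 3 + S + S⁻¹ = C Cᵀ + 1`, which is positive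
definite. Every row and column of `B` sums to `5`, so `B J = J B = 5 J` and `J B⁻¹ = J / 5`;
hence `J X = 0` and `B X = 2 ((n-1) I - J)`, and the four blocks of `Q H` collapse to `4 (n-1) I`.
-/

theorem Matrix.circulant_single_mul_circulant_single {ι R : Type*} [AddGroup ι] [Fintype ι]
    [DecidableEq ι] [NonUnitalNonAssocSemiring R] (a b : ι) (x y : R) :
    circulant (Pi.single a x) * circulant (Pi.single b y) =
      circulant (Pi.single (a + b) (x * y)) := by
  ext i j
  simp only [mul_apply, circulant_apply, Pi.single_apply, mul_ite, ite_mul, zero_mul, mul_zero]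
  rw [Finset.sum_eq_single (b + j)]
  · simp [sub_eq_iff_eq_add, add_assoc]
  · intro k _ hk
    simp [sub_eq_iff_eq_add, hk]
  · simp

theorem Matrix.transpose_circulant_single {ι R : Type*} [AddGroup ι] [DecidableEq ι] [Zero R]
    (a : ι) (x : R) : (circulant (Pi.single a x))ᵀ = circulant (Pi.single (-a) x) := by
  rw [transpose_circulant]
  congr 1
  ext i
  simp [Pi.single_apply, neg_eq_iff_eq_neg]

section Circ

variable {m : ℕ}

theorem circ_eq_transpose_circulant (v : Fin m → ℝ) : circ v = (circulant v)ᵀ := rfl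

theorem circ_cycle_mul_transpose_add_one [NeZero m] :
    circ (Pi.single 0 1 + Pi.single (-1) 1 : Fin m → ℝ) *
        (circ (Pi.single 0 1 + Pi.single (-1) 1))ᵀ + 1 =
      circ (Pi.single 0 3 + Pi.single 1 1 + Pi.single (-1) 1) := by
  simp only [circ_eq_transpose_circulant, circulant_add, transpose_add, transpose_circulant_single,
    add_mul, mul_add, circulant_single_mul_circulant_single, neg_zero, neg_neg, add_zero, zero_add,
    mul_one, add_neg_cancel]
  rw [← circulant_single_one ℝ (Fin m)]
  simp only [← circulant_add]
  congr 1
  ext k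
  simp only [Pi.add_apply, Pi.single_apply]
  split_ifs <;> norm_num

theorem sum_circ_row [NeZero m] (v : Fin m → ℝ) (i : Fin m) :
    ∑ j, circ v i j = ∑ k, v k :=
  Fintype.sum_equiv (Equiv.subRight i) _ _ fun _ => rfl

theorem sum_circ_col [NeZero m] (v : Fin m → ℝ) (j : Fin m) :
    ∑ i, circ v i j = ∑ k, v k :=
  Fintype.sum_equiv (Equiv.subLeft j) _ _ fun _ => rfl

theorem Fin.val_eq_sub_one_iff [NeZero m] {k : Fin m} : k.val = m - 1 ↔ k = -1 := by
  obtain ⟨l, rfl⟩ := Nat.exists_eq_succ_of_ne_zero (NeZero.ne m)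
  rw [Fin.ext_iff, Fin.coe_neg_one, Nat.succ_sub_one]

theorem Fin.val_eq_one_iff_of_two_le [NeZero m] (hm : 2 ≤ m) {k : Fin m} :
    k.val = 1 ↔ k = 1 := by
  rw [Fin.ext_iff, Fin.val_one', Nat.mod_eq_of_lt hm]

theorem ite_val_cycle_eq [NeZero m] (hm : 2 ≤ m) :
    (fun k : Fin m => if k.val = 0 ∨ k.val = m - 1 then (1 : ℝ) else 0) =
      Pi.single 0 1 + Pi.single (-1) 1 := by
  have h0 : (0 : Fin m) ≠ -1 := by rw [ne_eq, ← Fin.val_eq_sub_one_iff, Fin.val_zero]; omega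
  ext k
  simp only [Fin.val_eq_zero_iff, Fin.val_eq_sub_one_iff, Pi.add_apply, Pi.single_apply]
  split_ifs <;> simp_all

theorem ite_val_wheel_eq [NeZero m] (hm : 3 ≤ m) :
    (fun k : Fin m =>
        if k.val = 0 then (3 : ℝ) else if k.val = 1 ∨ k.val = m - 1 then 1 else 0) =
      Pi.single 0 3 + Pi.single 1 1 + Pi.single (-1) 1 := by
  have h01 : (0 : Fin m) ≠ 1 := by rw [ne_eq, ← Fin.val_eq_one_iff_of_two_le (by omega)]; simp
  have h0 : (0 : Fin m) ≠ -1 := by rw [ne_eq, ← Fin.val_eq_sub_one_iff, Fin.val_zero]; omega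
  have h1 : (1 : Fin m) ≠ -1 := by
    rw [ne_eq, ← Fin.val_eq_sub_one_iff, Fin.val_one', Nat.mod_eq_of_lt (by omega)]; omega
  ext k
  simp only [Fin.val_eq_zero_iff, Fin.val_eq_sub_one_iff,
    Fin.val_eq_one_iff_of_two_le (by omega : 2 ≤ m), Pi.add_apply, Pi.single_apply]
  split_ifs <;> simp_all

end Circ

theorem isUnit_det_mul_transpose_add_one {ι : Type*} [Fintype ι] [DecidableEq ι]
    (C : Matrix ι ι ℝ) : IsUnit (C * Cᵀ + 1).det := by
  have hCC : (C * Cᵀ).PosSemidef := by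
    simpa only [conjTranspose_eq_transpose_of_trivial] using posSemidef_self_mul_conjTranspose C
  exact (PosDef.posSemidef_add hCC PosDef.one).det_pos.ne'.isUnit

section Jmat

variable {m : ℕ}

theorem Jmat_mul_Jmat : Jmat m * Jmat m = (m : ℝ) • Jmat m := by
  ext i j
  simp [Jmat, mul_apply]

theorem mul_Jmat_of_row_sums {A : Matrix (Fin m) (Fin m) ℝ} {s : ℝ}
    (hA : ∀ i, ∑ j, A i j = s) :
    A * Jmat m = s • Jmat m := by
  ext i j
  simp [Jmat, mul_apply, hA]

theorem Jmat_mul_of_col_sums {A : Matrix (Fin m) (Fin m) ℝ} {s : ℝ}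
    (hA : ∀ j, ∑ i, A i j = s) :
    Jmat m * A = s • Jmat m := by
  ext i j
  simp [Jmat, mul_apply, hA]

theorem sum_col_eq_zero_of_Jmat_mul_eq_zero {A : Matrix (Fin m) (Fin m) ℝ} (hA : Jmat m * A = 0)
    (j : Fin m) : ∑ i, A i j = 0 := by
  simpa [Jmat, mul_apply] using congrFun (congrFun hA j) j

theorem Jmat_mul_inv_mul_smul_one_sub_Jmat_eq_zero {B : Matrix (Fin m) (Fin m) ℝ} {s : ℝ}
    (hs : s ≠ 0) (hJB : Jmat m * B = s • Jmat m) (hB : IsUnit B.det) :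
    Jmat m * (B⁻¹ * ((m : ℝ) • 1 - Jmat m)) = 0 := by
  have hJBinv : Jmat m * B⁻¹ = s⁻¹ • Jmat m := by
    rw [← inv_smul_smul₀ hs (Jmat m * B⁻¹), ← smul_mul, ← hJB,
      mul_nonsing_inv_cancel_right _ _ hB]
  rw [← mul_assoc, hJBinv, smul_mul, mul_sub, Matrix.mul_smul, mul_one, Jmat_mul_Jmat, sub_self,
    smul_zero]

end Jmat

theorem wheel_block_mul_eq_smul_one {m : ℕ} {B X : Matrix (Fin m) (Fin m) ℝ}
    (hB : ∀ i, ∑ j, B i j = 5) (hBX : B * X = (2 : ℝ) • ((m : ℝ) • 1 - Jmat m))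
    (hJX : Jmat m * X = 0) :
    fromBlocks (of fun _ _ => (m : ℝ)) (of fun _ _ => 1) (of fun _ _ => 1) B *
        fromBlocks (of fun _ _ => 5) (of fun _ _ => -1) (of fun _ _ => -1)
          (Jmat m + (2 : ℝ) • X) =
      (4 * (m : ℝ)) • (1 : Matrix (Fin 1 ⊕ Fin m) (Fin 1 ⊕ Fin m) ℝ) := by
  have hJ : (of fun _ _ => 1 : Matrix (Fin m) (Fin 1) ℝ) *
      (of fun _ _ => -1 : Matrix (Fin 1) (Fin m) ℝ) = -Jmat m := by
    ext i j
    simp [Jmat, mul_apply]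
  rw [fromBlocks_multiply, ← fromBlocks_one, fromBlocks_smul, smul_zero, smul_zero, hJ, mul_add,
    mul_Jmat_of_row_sums hB, Matrix.mul_smul, hBX]
  congr 1
  · ext i j
    simp [mul_apply, one_apply, Subsingleton.elim i j]
    ring
  · ext i j
    simp [mul_apply, Finset.sum_add_distrib, ← Finset.mul_sum, Jmat,
      sum_col_eq_zero_of_Jmat_mul_eq_zero hJX j]
  · ext i j
    simp [mul_apply, hB]
  · module

def Matrix.IsMoorePenroseInverse {m n R : Type*} [Fintype m] [Fintype n] [Mul R] [AddCommMonoid R]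
    (A : Matrix m n R) (G : Matrix n m R) : Prop :=
  A * G * A = A ∧ G * A * G = G ∧ (A * G)ᵀ = A * G ∧ (G * A)ᵀ = G * A

theorem Matrix.isMoorePenroseInverse_of_mul_eq_one {n R : Type*} [Fintype n] [DecidableEq n]
    [CommRing R] {A G : Matrix n n R} (h : A * G = 1) : A.IsMoorePenroseInverse G := by
  have h' : G * A = 1 := mul_eq_one_comm.mp h
  exact ⟨by rw [h, one_mul], by rw [h', one_mul], by rw [h, transpose_one],
    by rw [h', transpose_one]⟩

theorem wheel_signless_laplacian_moore_penrose (n : ℕ) (hn : 4 ≤ n)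
    (B C X : Matrix (Fin (n-1)) (Fin (n-1)) ℝ)
    (hB : B = circ (fun k => if k.val = 0 then (3:ℝ) else
      if k.val = 1 ∨ k.val = n - 2 then 1 else 0))
    (hC : C = circ (fun k => if k.val = 0 ∨ k.val = n - 2 then (1:ℝ) else 0))
    (hX : X = (2:ℝ) • ((C * Cᵀ + 1)⁻¹ * (((n:ℝ) - 1) • (1 : Matrix (Fin (n-1)) (Fin (n-1)) ℝ) - Jmat (n-1))))
    (Q : Matrix (Fin 1 ⊕ Fin (n-1)) (Fin 1 ⊕ Fin (n-1)) ℝ)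
    (hQ : Q = Matrix.fromBlocks (Matrix.of fun _ _ => (n:ℝ) - 1) (Matrix.of fun _ _ => 1)
      (Matrix.of fun _ _ => 1) B)
    (H : Matrix (Fin 1 ⊕ Fin (n-1)) (Fin 1 ⊕ Fin (n-1)) ℝ)
    (hH : H = (1 / (4 * ((n:ℝ) - 1))) •
      Matrix.fromBlocks (Matrix.of fun _ _ => 5) (Matrix.of fun _ _ => -1)
        (Matrix.of fun _ _ => -1) (Jmat (n-1) + (2:ℝ) • X)) :
    Q * H * Q = Q ∧ H * Q * H = H ∧ (Q * H)ᵀ = Q * H ∧ (H * Q)ᵀ = H * Q := by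
  have hm : 3 ≤ n - 1 := by omega
  have : NeZero (n - 1) := ⟨by omega⟩
  have hcast : (n : ℝ) - 1 = ((n - 1 : ℕ) : ℝ) := by
    rw [Nat.cast_sub (by omega), Nat.cast_one]
  rw [show n - 2 = n - 1 - 1 by omega, ite_val_wheel_eq hm] at hB
  rw [show n - 2 = n - 1 - 1 by omega, ite_val_cycle_eq (by omega)] at hC
  have hCB : C * Cᵀ + 1 = B := by rw [hB, hC]; exact circ_cycle_mul_transpose_add_one
  have hsum : ∑ k, (Pi.single 0 3 + Pi.single 1 1 + Pi.single (-1) 1 : Fin (n - 1) → ℝ) k = 5 := by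
    norm_num [Finset.sum_add_distrib]
  have hrow : ∀ i, ∑ j, B i j = 5 := fun i => by rw [hB, sum_circ_row, hsum]
  have hcol : ∀ j, ∑ i, B i j = 5 := fun j => by rw [hB, sum_circ_col, hsum]
  have hdet : IsUnit B.det := hCB ▸ isUnit_det_mul_transpose_add_one C
  rw [hCB, hcast] at hX
  have hBX : B * X = (2 : ℝ) • (((n - 1 : ℕ) : ℝ) • 1 - Jmat (n - 1)) := by
    rw [hX, Matrix.mul_smul, mul_nonsing_inv_cancel_left _ _ hdet]
  have hJX : Jmat (n - 1) * X = 0 := by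
    rw [hX, Matrix.mul_smul, Jmat_mul_inv_mul_smul_one_sub_Jmat_eq_zero (by norm_num)
      (Jmat_mul_of_col_sums hcol) hdet, smul_zero]
  have hQH : Q * H = 1 := by
    have h4 : 4 * ((n - 1 : ℕ) : ℝ) ≠ 0 := by positivity
    rw [hQ, hH, hcast, Matrix.mul_smul, wheel_block_mul_eq_smul_one hrow hBX hJX, smul_smul,
      one_div, inv_mul_cancel₀ h4, one_smul]
  exact isMoorePenroseInverse_of_mul_eq_one hQH
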